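/- Let G be a strongly connected almost bunchy finite graph that is not bunchy, and let Φ: G → M(G) be any right-resolver. Then the stability relation ∼_Φ is nontrivial: there exist distinct states J₁ ≠ J₂ of G with J₁ ∼_Φ J₂. -/

import Mathlib

/-- A finite directed multigraph. -/
structure FinGraph where
  V : Type
  E : Type
  [fintV : Fintype V]
  [fintE : Fintype E]
  [decV : DecidableEq V]
  [decE : DecidableEq E]
  src : E → V
  tgt : E → V

attribute [instance] FinGraph.fintV FinGraph.fintE FinGraph.decV FinGraph.decE

/-- A graph homomorphism. -/
structure GHom (G H : FinGraph) where
  eMap : G.E → H.E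
  vMap : G.V → H.V
  src_eq : ∀ e, H.src (eMap e) = vMap (G.src e)
  tgt_eq : ∀ e, H.tgt (eMap e) = vMap (G.tgt e)

def GHom.comp {G K H : FinGraph} (Δ : GHom K H) (Ψ : GHom G K) : GHom G H where
  eMap := Δ.eMap ∘ Ψ.eMap
  vMap := Δ.vMap ∘ Ψ.vMap
  src_eq := fun e => by
    simp only [Function.comp_apply, Δ.src_eq, Ψ.src_eq]
  tgt_eq := fun e => by
    simp only [Function.comp_apply, Δ.tgt_eq, Ψ.tgt_eq]

/-- The restriction of a homomorphism to the outgoing edges of a state. -/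
def outMap {G H : FinGraph} (Φ : GHom G H) (I : G.V) :
    {e : G.E // G.src e = I} → {f : H.E // H.src f = Φ.vMap I} :=
  fun e => ⟨Φ.eMap e.1, (Φ.src_eq e.1).trans (congrArg Φ.vMap e.2)⟩

/-- A right-resolver: a surjective homomorphism restricting to a bijection
on the outgoing edges of each state. -/
def IsRR {G H : FinGraph} (Φ : GHom G H) : Prop :=
  Function.Surjective Φ.vMap ∧ ∀ I : G.V, Function.Bijective (outMap Φ I)

/-- `IsPathFrom H I u`: the edge list `u` is a path in `H` starting at `I`. -/
def IsPathFrom (H : FinGraph) : H.V → List H.E → Prop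
  | _, [] => True
  | I, e :: u => H.src e = I ∧ IsPathFrom H (H.tgt e) u

/-- The terminal state of a path starting at `I`. -/
def pathEnd (H : FinGraph) (I : H.V) (u : List H.E) : H.V :=
  u.foldl (fun _ e => H.tgt e) I

/-- One-step transition: `I · a` is the target of the unique edge at `I`
lifting `a` (when `Φ` is right-resolving and `a` starts at the image of `I`). -/
noncomputable def step {G H : FinGraph} (Φ : GHom G H) (I : G.V) (a : H.E) : G.V :=
  if h : ∃ e : G.E, G.src e = I ∧ Φ.eMap e = a then G.tgt h.choose else I

/-- Transition along a word: `I · u`. -/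
noncomputable def transPath {G H : FinGraph} (Φ : GHom G H) (I : G.V) (u : List H.E) : G.V :=
  u.foldl (step Φ) I

/-- The stability relation of a right-resolver. -/
def Stable {G H : FinGraph} (Φ : GHom G H) (I₁ I₂ : G.V) : Prop :=
  Φ.vMap I₁ = Φ.vMap I₂ ∧
  ∀ u : List H.E, IsPathFrom H (Φ.vMap I₁) u →
    ∃ v : List H.E, IsPathFrom H (pathEnd H (Φ.vMap I₁) u) v ∧
      transPath Φ I₁ (u ++ v) = transPath Φ I₂ (u ++ v)

/-- A right-resolver is synchronizing if each fiber of its state map is a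
single stability class. -/
def Synchronizing {G H : FinGraph} (Φ : GHom G H) : Prop :=
  ∀ I₁ I₂ : G.V, Φ.vMap I₁ = Φ.vMap I₂ → Stable Φ I₁ I₂

/-- The fiber of the state map over a state of the codomain. -/
def fiber {G H : FinGraph} (Φ : GHom G H) (I : H.V) : Set G.V := {J | Φ.vMap J = I}

/-- The image `U · u` of a set of states under transition along a word. -/
noncomputable def setTrans {G H : FinGraph} (Φ : GHom G H) (U : Set G.V)
    (u : List H.E) : Set G.V :=
  (fun J => transPath Φ J u) '' U

/-- A minimal image of a right-resolver. -/
def IsMinImage {G H : FinGraph} (Φ : GHom G H) (U : Set G.V) : Prop :=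
  ∃ (I : H.V) (u : List H.E), IsPathFrom H I u ∧ U = setTrans Φ (fiber Φ I) u ∧
    ∀ v : List H.E, IsPathFrom H (pathEnd H I u) v →
      (setTrans Φ U v).ncard = U.ncard

/-- Strong connectedness: a directed path between every ordered pair of states. -/
def StronglyConnected (G : FinGraph) : Prop :=
  ∀ I J : G.V, ∃ u : List G.E, IsPathFrom G I u ∧ pathEnd G I u = J

def MinimalRR (M : FinGraph) : Prop :=
  ∀ (H : FinGraph) (Φ : GHom M H), IsRR Φ →
    Function.Bijective Φ.eMap ∧ Function.Bijective Φ.vMap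

/-- Bunchiness relative to the state map σ onto the minimal factor. -/
def BunchyVia {G M : FinGraph} (σ : G.V → M.V) : Prop :=
  ∀ e e' : G.E, G.src e = G.src e' → σ (G.tgt e) = σ (G.tgt e') →
    G.tgt e = G.tgt e'

/-- Almost bunchiness: for every fiber-image state J, at most one state in
each σ-fiber has two distinct followers in the σ-fiber of J. -/
def AlmostBunchyVia {G M : FinGraph} (σ : G.V → M.V) : Prop :=
  ∀ (J : M.V) (I₁' I₂' : G.V), σ I₁' = σ I₂' →
    (∃ e e' : G.E, G.src e = I₁' ∧ G.src e' = I₁' ∧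
      σ (G.tgt e) = J ∧ σ (G.tgt e') = J ∧ G.tgt e ≠ G.tgt e') →
    (∃ e e' : G.E, G.src e = I₂' ∧ G.src e' = I₂' ∧
      σ (G.tgt e) = J ∧ σ (G.tgt e') = J ∧ G.tgt e ≠ G.tgt e') →
    I₁' = I₂'

/-!
Non-bunchiness gives two edges `e`, `e'` out of one state `I` whose targets are distinct but
lie in one fiber, so their images `a`, `a'` in `M` have the same source and target. Put `I` in
a minimal image `U`. By almost bunchiness no other state of `U` has two followers in that
fiber, so `a` and `a'` act identically on `U \ {I}`: the minimal images `U·a` and `U·a'` differ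
only in `I·a = tgt e` versus `I·a' = tgt e'`. Two minimal images differing in one state make
those two states stable: any word extends to one that maps the whole fiber onto a minimal
image, and both images must fill that minimal image bijectively.
-/

open Set

variable {G M : FinGraph} {Φ : GHom G M}

lemma pathEnd_append (H : FinGraph) (I : H.V) (u v : List H.E) :
    pathEnd H I (u ++ v) = pathEnd H (pathEnd H I u) v :=
  List.foldl_append

lemma isPathFrom_append {H : FinGraph} {I : H.V} {u v : List H.E} :
    IsPathFrom H I (u ++ v) ↔ IsPathFrom H I u ∧ IsPathFrom H (pathEnd H I u) v := by
  induction u generalizing I with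
  | nil => simp [IsPathFrom, pathEnd]
  | cons e u ih =>
    simp only [List.cons_append, IsPathFrom, ih, pathEnd, List.foldl_cons, and_assoc]

lemma transPath_append (I : G.V) (u v : List M.E) :
    transPath Φ I (u ++ v) = transPath Φ (transPath Φ I u) v :=
  List.foldl_append

lemma GHom.pathEnd_map (Φ : GHom G M) (I : G.V) (w : List G.E) :
    pathEnd M (Φ.vMap I) (w.map Φ.eMap) = Φ.vMap (pathEnd G I w) := by
  induction w generalizing I with
  | nil => rfl
  | cons e w ih => simpa [pathEnd, Φ.tgt_eq] using ih (G.tgt e)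

lemma GHom.isPathFrom_map (Φ : GHom G M) {I : G.V} {w : List G.E} (hw : IsPathFrom G I w) :
    IsPathFrom M (Φ.vMap I) (w.map Φ.eMap) := by
  induction w generalizing I with
  | nil => trivial
  | cons e w ih => exact ⟨by rw [Φ.src_eq, hw.1], by rw [Φ.tgt_eq]; exact ih hw.2⟩

namespace IsRR

lemma exists_lift (hΦ : IsRR Φ) {K : G.V} {a : M.E} (ha : M.src a = Φ.vMap K) :
    ∃ e : G.E, G.src e = K ∧ Φ.eMap e = a := by
  obtain ⟨⟨e, he⟩, hfe⟩ := (hΦ.2 K).2 ⟨a, ha⟩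
  exact ⟨e, he, congrArg Subtype.val hfe⟩

lemma eq_of_src_eq_of_eMap_eq (hΦ : IsRR Φ) {e e' : G.E} (hs : G.src e = G.src e')
    (hm : Φ.eMap e = Φ.eMap e') : e = e' :=
  congrArg Subtype.val <| (hΦ.2 (G.src e)).1 (a₁ := ⟨e, rfl⟩) (a₂ := ⟨e', hs.symm⟩)
    (Subtype.ext hm)

lemma step_eq (hΦ : IsRR Φ) {K : G.V} {a : M.E} {e : G.E} (he : G.src e = K)
    (hae : Φ.eMap e = a) : step Φ K a = G.tgt e := by
  have h : ∃ f : G.E, G.src f = K ∧ Φ.eMap f = a := ⟨e, he, hae⟩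
  rw [step, dif_pos h, hΦ.eq_of_src_eq_of_eMap_eq (h.choose_spec.1.trans he.symm)
    (h.choose_spec.2.trans hae.symm)]

lemma vMap_step (hΦ : IsRR Φ) {K : G.V} {a : M.E} (ha : M.src a = Φ.vMap K) :
    Φ.vMap (step Φ K a) = M.tgt a := by
  obtain ⟨e, he, rfl⟩ := hΦ.exists_lift ha
  rw [hΦ.step_eq he rfl, Φ.tgt_eq]

lemma vMap_transPath (hΦ : IsRR Φ) {K : G.V} {u : List M.E}
    (hu : IsPathFrom M (Φ.vMap K) u) : Φ.vMap (transPath Φ K u) = pathEnd M (Φ.vMap K) u := by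
  induction u generalizing K with
  | nil => rfl
  | cons a u ih =>
    have hK := hΦ.vMap_step hu.1
    have := ih (K := step Φ K a) (by rw [hK]; exact hu.2)
    simpa [transPath, pathEnd, hK] using this

lemma transPath_map (hΦ : IsRR Φ) {I : G.V} {w : List G.E} (hw : IsPathFrom G I w) :
    transPath Φ I (w.map Φ.eMap) = pathEnd G I w := by
  induction w generalizing I with
  | nil => rfl
  | cons e w ih => simpa [transPath, pathEnd, hΦ.step_eq hw.1 rfl] using ih hw.2

lemma stronglyConnected (hΦ : IsRR Φ) (hsc : StronglyConnected G) : StronglyConnected M := by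
  intro P Q
  obtain ⟨I, rfl⟩ := hΦ.1 P
  obtain ⟨K, rfl⟩ := hΦ.1 Q
  obtain ⟨w, hw, rfl⟩ := hsc I K
  exact ⟨w.map Φ.eMap, Φ.isPathFrom_map hw, Φ.pathEnd_map I w⟩

end IsRR

lemma setTrans_append (U : Set G.V) (u v : List M.E) :
    setTrans Φ U (u ++ v) = setTrans Φ (setTrans Φ U u) v := by
  simp only [setTrans, image_image, transPath_append]

lemma setTrans_mono {U V : Set G.V} (h : U ⊆ V) (u : List M.E) :
    setTrans Φ U u ⊆ setTrans Φ V u :=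
  image_mono h

lemma ncard_setTrans_le (U : Set G.V) (u : List M.E) : (setTrans Φ U u).ncard ≤ U.ncard :=
  ncard_image_le U.toFinite

lemma IsRR.setTrans_subset_fiber (hΦ : IsRR Φ) {U : Set G.V} {P : M.V}
    (hU : U ⊆ fiber Φ P) {u : List M.E} (hu : IsPathFrom M P u) :
    setTrans Φ U u ⊆ fiber Φ (pathEnd M P u) := by
  rintro _ ⟨K, hK, rfl⟩
  have hK : Φ.vMap K = P := hU hK
  subst hK
  exact hΦ.vMap_transPath hu

lemma exists_isMinImage_setTrans_append (P : M.V) {u : List M.E}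
    (hu : IsPathFrom M P u) :
    ∃ v : List M.E, IsPathFrom M (pathEnd M P u) v ∧
      IsMinImage Φ (setTrans Φ (fiber Φ P) (u ++ v)) := by
  let S : Set ℕ := {n | ∃ v, IsPathFrom M (pathEnd M P u) v ∧
    (setTrans Φ (fiber Φ P) (u ++ v)).ncard = n}
  obtain ⟨v, hv, hvS⟩ := Nat.sInf_mem (s := S) ⟨_, [], trivial, rfl⟩
  refine ⟨v, hv, P, u ++ v, isPathFrom_append.mpr ⟨hu, hv⟩, rfl, fun w hw => ?_⟩
  rw [pathEnd_append] at hw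
  have hmin : sInf S ≤ (setTrans Φ (setTrans Φ (fiber Φ P) (u ++ v)) w).ncard := by
    rw [← setTrans_append, List.append_assoc]
    exact Nat.sInf_le ⟨v ++ w, isPathFrom_append.mpr ⟨hv, hw⟩, rfl⟩
  exact le_antisymm (ncard_setTrans_le _ _) (hvS ▸ hmin)

lemma isMinImage_setTrans {U : Set G.V} (hU : IsMinImage Φ U) (hΦ : IsRR Φ) {K : G.V}
    (hK : K ∈ U) {v : List M.E} (hv : IsPathFrom M (Φ.vMap K) v) :
    IsMinImage Φ (setTrans Φ U v) := by
  obtain ⟨I, u, hu, rfl, hmin⟩ := hU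
  rw [show Φ.vMap K = pathEnd M I u from hΦ.setTrans_subset_fiber (subset_refl _) hu hK] at hv
  refine ⟨I, u ++ v, isPathFrom_append.mpr ⟨hu, hv⟩, (setTrans_append _ _ _).symm,
    fun w hw => ?_⟩
  rw [pathEnd_append] at hw
  rw [← setTrans_append, hmin (v ++ w) (isPathFrom_append.mpr ⟨hv, hw⟩), hmin v hv]

namespace IsMinImage

variable {U : Set G.V}

lemma subset_fiber (hU : IsMinImage Φ U) (hΦ : IsRR Φ) {K : G.V} (hK : K ∈ U) :
    U ⊆ fiber Φ (Φ.vMap K) := by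
  obtain ⟨I, u, hu, rfl, -⟩ := hU
  have hsub := hΦ.setTrans_subset_fiber (subset_refl _) hu
  rwa [show Φ.vMap K = pathEnd M I u from hsub hK]

lemma nonempty (hU : IsMinImage Φ U) (hΦ : IsRR Φ) : U.Nonempty := by
  obtain ⟨I, u, -, rfl, -⟩ := hU
  exact Nonempty.image _ (hΦ.1 I)

lemma ncard_setTrans (hU : IsMinImage Φ U) (hΦ : IsRR Φ) {K : G.V} (hK : K ∈ U)
    {v : List M.E} (hv : IsPathFrom M (Φ.vMap K) v) : (setTrans Φ U v).ncard = U.ncard := by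
  obtain ⟨I, u, hu, rfl, hmin⟩ := hU
  rw [show Φ.vMap K = pathEnd M I u from hΦ.setTrans_subset_fiber (subset_refl _) hu hK] at hv
  exact hmin v hv

lemma injOn (hU : IsMinImage Φ U) (hΦ : IsRR Φ) {K : G.V} (hK : K ∈ U)
    {v : List M.E} (hv : IsPathFrom M (Φ.vMap K) v) : InjOn (transPath Φ · v) U :=
  injOn_of_ncard_image_eq (hU.ncard_setTrans hΦ hK hv) U.toFinite

lemma ncard_le (hU : IsMinImage Φ U) (hΦ : IsRR Φ) (hsc : StronglyConnected G)
    {U' : Set G.V} (hU' : IsMinImage Φ U') : U.ncard ≤ U'.ncard := by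
  obtain ⟨I, u, hu, rfl, hmin⟩ := hU
  obtain ⟨I', u', hu', rfl, -⟩ := hU'
  obtain ⟨w, hw, hwI'⟩ := hΦ.stronglyConnected hsc (pathEnd M I u) I'
  have hfib : setTrans Φ (setTrans Φ (fiber Φ I) u) w ⊆ fiber Φ I' :=
    hwI' ▸ hΦ.setTrans_subset_fiber (hΦ.setTrans_subset_fiber (subset_refl _) hu) hw
  calc (setTrans Φ (fiber Φ I) u).ncard
      = (setTrans Φ (setTrans Φ (fiber Φ I) u) (w ++ u')).ncard :=
        (hmin _ (isPathFrom_append.mpr ⟨hw, hwI' ▸ hu'⟩)).symm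
    _ ≤ (setTrans Φ (fiber Φ I') u').ncard := by
        rw [setTrans_append]
        exact ncard_le_ncard (setTrans_mono hfib u') (toFinite _)

lemma ncard_eq (hU : IsMinImage Φ U) (hΦ : IsRR Φ) (hsc : StronglyConnected G)
    {U' : Set G.V} (hU' : IsMinImage Φ U') : U.ncard = U'.ncard :=
  (hU.ncard_le hΦ hsc hU').antisymm (hU'.ncard_le hΦ hsc hU)

end IsMinImage

lemma IsRR.exists_isMinImage_mem (hΦ : IsRR Φ) (hsc : StronglyConnected G) (K : G.V) :
    ∃ U, IsMinImage Φ U ∧ K ∈ U := by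
  obtain ⟨v, -, hX⟩ :=
    exists_isMinImage_setTrans_append (Φ := Φ) (Φ.vMap K) (u := []) trivial
  obtain ⟨L, hL⟩ := hX.nonempty hΦ
  obtain ⟨w, hw, hwK⟩ := hsc L K
  exact ⟨_, isMinImage_setTrans hX hΦ hL (Φ.isPathFrom_map hw),
    L, hL, (hΦ.transPath_map hw).trans hwK⟩

lemma IsRR.stable_of_isMinImage_insert (hΦ : IsRR Φ) (hsc : StronglyConnected G)
    {C : Set G.V} {J₁ J₂ : G.V} (h₁ : IsMinImage Φ (insert J₁ C))
    (h₂ : IsMinImage Φ (insert J₂ C)) (hJ : Φ.vMap J₁ = Φ.vMap J₂) (hJ₂C : J₂ ∉ C) :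
    Stable Φ J₁ J₂ := by
  refine ⟨hJ, fun u hu => ?_⟩
  obtain ⟨v, hv, hX⟩ := exists_isMinImage_setTrans_append (Φ := Φ) _ hu
  refine ⟨v, hv, ?_⟩
  have huv : IsPathFrom M (Φ.vMap J₁) (u ++ v) := isPathFrom_append.mpr ⟨hu, hv⟩
  have hf₁ := h₁.subset_fiber hΦ (mem_insert J₁ C)
  have hf₂ : insert J₂ C ⊆ fiber Φ (Φ.vMap J₁) := hJ ▸ h₂.subset_fiber hΦ (mem_insert J₂ C)
  have hfill :
      setTrans Φ (insert J₁ C) (u ++ v) = setTrans Φ (fiber Φ (Φ.vMap J₁)) (u ++ v) :=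
    eq_of_subset_of_ncard_le (setTrans_mono hf₁ _)
      ((hX.ncard_eq hΦ hsc (isMinImage_setTrans h₁ hΦ (mem_insert J₁ C) huv)).le) (toFinite _)
  obtain ⟨K, hK, hKJ₂⟩ : transPath Φ J₂ (u ++ v) ∈ setTrans Φ (insert J₁ C) (u ++ v) :=
    hfill ▸ setTrans_mono hf₂ _ (mem_image_of_mem _ (mem_insert J₂ C))
  rcases hK with rfl | hKC
  · exact hKJ₂
  · have hinj := h₂.injOn hΦ (mem_insert J₂ C) (hJ ▸ huv)
    exact absurd (hinj (mem_insert_of_mem _ hKC) (mem_insert J₂ C) hKJ₂ ▸ hKC) hJ₂C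

lemma IsRR.stable_step_of_eqOn (hΦ : IsRR Φ) (hsc : StronglyConnected G) {U : Set G.V}
    (hU : IsMinImage Φ U) {I : G.V} (hI : I ∈ U) {a a' : M.E} (ha : M.src a = Φ.vMap I)
    (ha' : M.src a' = Φ.vMap I) (htgt : M.tgt a = M.tgt a')
    (heq : EqOn (step Φ · a) (step Φ · a') (U \ {I})) :
    Stable Φ (step Φ I a) (step Φ I a') := by
  set C := (step Φ · a) '' (U \ {I})
  have hU_eq : U = insert I (U \ {I}) := (insert_sdiff_self_of_mem hI).symm
  have h₁ : setTrans Φ U [a] = insert (step Φ I a) C := by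
    conv_lhs => rw [hU_eq]
    exact image_insert_eq
  have h₂ : setTrans Φ U [a'] = insert (step Φ I a') C := by
    conv_lhs => rw [hU_eq]
    refine image_insert_eq.trans (congrArg _ (image_congr fun K hK => ?_))
    exact (heq hK).symm
  have hnot : step Φ I a' ∉ C := by
    rintro ⟨K, ⟨hKU, hKI⟩, hK⟩
    exact hKI (hU.injOn hΦ hI (v := [a']) ⟨ha', trivial⟩ hKU hI
      ((heq ⟨hKU, hKI⟩).symm.trans hK))
  refine hΦ.stable_of_isMinImage_insert hsc ?_ ?_ ?_ hnot
  · exact h₁ ▸ isMinImage_setTrans hU hΦ hI ⟨ha, trivial⟩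
  · exact h₂ ▸ isMinImage_setTrans hU hΦ hI ⟨ha', trivial⟩
  · rw [hΦ.vMap_step ha, hΦ.vMap_step ha', htgt]

lemma IsRR.step_eq_step_of_almostBunchy (hΦ : IsRR Φ) (hab : AlmostBunchyVia Φ.vMap)
    {e e' : G.E} (hsrc : G.src e = G.src e') (hσ : Φ.vMap (G.tgt e) = Φ.vMap (G.tgt e'))
    (hne : G.tgt e ≠ G.tgt e') {K : G.V} (hK : Φ.vMap K = Φ.vMap (G.src e))
    (hKI : K ≠ G.src e) : step Φ K (Φ.eMap e) = step Φ K (Φ.eMap e') := by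
  obtain ⟨f, hf, hfe⟩ := hΦ.exists_lift (K := K) (a := Φ.eMap e) (by rw [Φ.src_eq, hK])
  obtain ⟨f', hf', hfe'⟩ :=
    hΦ.exists_lift (K := K) (a := Φ.eMap e') (by rw [Φ.src_eq, hK, hsrc])
  rw [hΦ.step_eq hf hfe, hΦ.step_eq hf' hfe']
  by_contra hff'
  refine hKI (hab _ K _ hK ⟨f, f', hf, hf', ?_, ?_, hff'⟩
    ⟨e, e', rfl, hsrc.symm, rfl, hσ.symm, hne⟩)
  · rw [← Φ.tgt_eq, hfe, Φ.tgt_eq]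
  · rw [← Φ.tgt_eq, hfe', Φ.tgt_eq, hσ]

theorem almost_bunchy_not_bunchy_stable_general {G M : FinGraph} (Φ : GHom G M)
    (hΦ : IsRR Φ) (hsc : StronglyConnected G)
    (hab : AlmostBunchyVia Φ.vMap) (hnb : ¬ BunchyVia Φ.vMap) :
    ∃ J₁ J₂ : G.V, J₁ ≠ J₂ ∧ Stable Φ J₁ J₂ := by
  simp only [BunchyVia, not_forall] at hnb
  obtain ⟨e, e', hsrc, hσ, hne⟩ := hnb
  obtain ⟨U, hU, hIU⟩ := hΦ.exists_isMinImage_mem hsc (G.src e)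
  have hstable := hΦ.stable_step_of_eqOn hsc hU hIU (Φ.src_eq e) (by rw [Φ.src_eq, hsrc])
    (by rw [Φ.tgt_eq, Φ.tgt_eq, hσ]) fun K hK =>
      hΦ.step_eq_step_of_almostBunchy hab hsrc hσ hne (hU.subset_fiber hΦ hIU hK.1) hK.2
  rw [hΦ.step_eq rfl rfl, hΦ.step_eq hsrc.symm rfl] at hstable
  exact ⟨_, _, hne, hstable⟩

/-- a strongly connected, almost bunchy but not bunchy graph has
nontrivial stability relation for any right-resolver onto its minimal factor. -/
theorem almost_bunchy_not_bunchy_stable {G M : FinGraph} (Φ : GHom G M)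
    (hΦ : IsRR Φ) (hM : MinimalRR M) (hsc : StronglyConnected G)
    (hab : AlmostBunchyVia Φ.vMap) (hnb : ¬ BunchyVia Φ.vMap) :
    ∃ J₁ J₂ : G.V, J₁ ≠ J₂ ∧ Stable Φ J₁ J₂ :=
  almost_bunchy_not_bunchy_stable_general Φ hΦ hsc hab hnb
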